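/- arXiv:1204.2887 — 2 statements merged into one kernel-verified Lean document; each statement's English description precedes it below -/
import Mathlib

section
/- If (K, f) ∈ 𝒳, then ⋃_{n=1}^∞ K_n = N(f), i.e. the union of the sequence of closed sets K equals the set of non-knot points of f. -/
/-!
Each `N(f,a)` is closed (for continuous `f`) and consists of non-knot points; conversely, at a
non-knot point a one-sided difference quotient of `f` or of `-f` is bounded above, which puts the
point in `N(f,a)` for all large `a`. Hence `K_i ⊆ N(f)`: the points of `K_i` lie in every
`δ_m`-neighbourhood of the closed set `N(f,b_i)`. Conversely a point of `N(f,a_j)` lies in the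
closure of `⋃_{i ∈ A_j^∞} K_i`, and the condition `K ∈ S_k(n,δ)` lets this closure descend one
level: a limit of points of sets `K_i` whose index enters `A_j^m` only at large `m` is a limit of
points of level `j-1`, since such a `K_i` lies within `δ_m` of level `j-1`. At level `1` the index
set `A_1^m = [n_1]` does not depend on `m`, so that union is closed.
-/

open Filter Topology TopologicalSpace Set MeasureTheory

noncomputable section

/-- The unit interval `I = [0,1]` as a type. -/
abbrev UI : Type := ↥(Set.Icc (0:ℝ) 1)

/-- The space `𝒦` of closed subsets of `I`, with the (extended) Hausdorff metric topology. -/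
abbrev KSp : Type := TopologicalSpace.Closeds UI

/-- The open `r`-neighbourhood of a set `A` within `I`. -/
def nbhd (A : Set UI) (r : ℝ) : Set UI := ⋃ a ∈ A, Metric.ball a r

/-- Upper right Dini derivative `D⁺f(x)`, as an extended real. -/
def DiniSupR (f : UI → ℝ) (x : UI) : EReal :=
  Filter.limsup (fun y : UI => (((f y - f x) / ((y : ℝ) - (x : ℝ))) : EReal)) (𝓝[>] x)

/-- Lower right Dini derivative `D₊f(x)`. -/
def DiniInfR (f : UI → ℝ) (x : UI) : EReal :=
  Filter.liminf (fun y : UI => (((f y - f x) / ((y : ℝ) - (x : ℝ))) : EReal)) (𝓝[>] x)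

/-- Upper left Dini derivative `D⁻f(x)`. -/
def DiniSupL (f : UI → ℝ) (x : UI) : EReal :=
  Filter.limsup (fun y : UI => (((f y - f x) / ((y : ℝ) - (x : ℝ))) : EReal)) (𝓝[<] x)

/-- Lower left Dini derivative `D₋f(x)`. -/
def DiniInfL (f : UI → ℝ) (x : UI) : EReal :=
  Filter.liminf (fun y : UI => (((f y - f x) / ((y : ℝ) - (x : ℝ))) : EReal)) (𝓝[<] x)

/-- `x` is a knot point of `f`. -/
def IsKnotPoint (f : UI → ℝ) (x : UI) : Prop :=
  (0 < (x:ℝ) ∧ (x:ℝ) < 1 ∧ DiniSupR f x = ⊤ ∧ DiniSupL f x = ⊤ ∧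
      DiniInfR f x = ⊥ ∧ DiniInfL f x = ⊥) ∨
  ((x:ℝ) = 0 ∧ DiniSupR f x = ⊤ ∧ DiniInfR f x = ⊥) ∨
  ((x:ℝ) = 1 ∧ DiniSupL f x = ⊤ ∧ DiniInfL f x = ⊥)

/-- `N(f)`: the set of points of `I` that are not knot points of `f`. -/
def NonKnot (f : UI → ℝ) : Set UI := {x | ¬ IsKnotPoint f x}

/-- `S` is an `Fσ` subset of `I`. -/
def IsFsigma (S : Set UI) : Prop :=
  ∃ F : ℕ → Set UI, (∀ n, IsClosed (F n)) ∧ S = ⋃ n, F n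

/-- `N⁺(f,a)`. -/
def NplusUp (f : UI → ℝ) (a : ℝ) : Set UI :=
  {x | (x:ℝ) ≤ 1 - 2^(-a) ∧
    ∀ y : UI, (x:ℝ) ≤ (y:ℝ) → (y:ℝ) ≤ (x:ℝ) + 2^(-a) →
      f y - f x ≤ a * ((y:ℝ) - (x:ℝ))}

/-- `N₊(f,a)`. -/
def NplusLow (f : UI → ℝ) (a : ℝ) : Set UI :=
  {x | (x:ℝ) ≤ 1 - 2^(-a) ∧
    ∀ y : UI, (x:ℝ) ≤ (y:ℝ) → (y:ℝ) ≤ (x:ℝ) + 2^(-a) →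
      -a * ((y:ℝ) - (x:ℝ)) ≤ f y - f x}

/-- `N⁻(f,a)`. -/
def NminusUp (f : UI → ℝ) (a : ℝ) : Set UI :=
  {x | 2^(-a) ≤ (x:ℝ) ∧
    ∀ y : UI, (x:ℝ) - 2^(-a) ≤ (y:ℝ) → (y:ℝ) ≤ (x:ℝ) →
      a * ((y:ℝ) - (x:ℝ)) ≤ f y - f x}

/-- `N₋(f,a)`. -/
def NminusLow (f : UI → ℝ) (a : ℝ) : Set UI :=
  {x | 2^(-a) ≤ (x:ℝ) ∧
    ∀ y : UI, (x:ℝ) - 2^(-a) ≤ (y:ℝ) → (y:ℝ) ≤ (x:ℝ) →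
      f y - f x ≤ -a * ((y:ℝ) - (x:ℝ))}

/-- `N̂(f,a) = N⁺(f,a) ∪ N₋(f,a)`. -/
def Nhat (f : UI → ℝ) (a : ℝ) : Set UI := NplusUp f a ∪ NminusLow f a

/-- `Ň(f,a) = N₊(f,a) ∪ N⁻(f,a)`. -/
def Ncheck (f : UI → ℝ) (a : ℝ) : Set UI := NplusLow f a ∪ NminusUp f a

/-- `N(f,a)`. -/
def NN (f : UI → ℝ) (a : ℝ) : Set UI := Nhat f a ∪ Ncheck f a

/-- `f : I → ℝ` is continuously differentiable on `I`. -/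
def IsC1 (f : UI → ℝ) : Prop :=
  ContDiffOn ℝ 1 (Set.IccExtend (zero_le_one : (0:ℝ) ≤ 1) f) (Set.Icc (0:ℝ) 1)

/-- `φ` is a bump function of height `h` and width `w` located at `H1` and `H2`. -/
def IsBump (φ : C(UI, ℝ)) (h w : ℝ) (H1 H2 : Set UI) : Prop :=
  IsC1 ⇑φ ∧ ‖φ‖ = h ∧ (∀ x ∈ H1, φ x = h) ∧ (∀ x ∈ H2, φ x = -h) ∧
  {x : UI | 0 < φ x} ⊆ nbhd H1 w ∧ {x : UI | φ x < 0} ⊆ nbhd H2 w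

/-- The shifted sequence `n^k`. -/
def shiftSeq (n : ℕ → ℕ) (k : ℕ) : ℕ → ℕ := fun j => n (j + k)

/-- The index set `A_j^m(n) = [n_j] ∪ ⋃_{i=j}^{m-1} {n_i+1, …, n_i+j-1}`. -/
def Aset (n : ℕ → ℕ) (j m : ℕ) : Set ℕ :=
  Set.Icc 1 (n j) ∪ ⋃ i ∈ Set.Ico j m, Set.Icc (n i + 1) (n i + (j - 1))

/-- `n ∈ Z`: sequence of positive integers with `n_{j+1} ≥ n_j + j`. -/
def memZ (n : ℕ → ℕ) : Prop := ∀ j, 1 ≤ j → 1 ≤ n j ∧ n j + j ≤ n (j + 1)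

/-- `δ ∈ Y`: strictly decreasing sequence in `(0,1)` tending to `0`. -/
def memY (δ : ℕ → ℝ) : Prop :=
  (∀ j, 1 ≤ j → 0 < δ j ∧ δ j < 1) ∧ (∀ j, 1 ≤ j → δ (j + 1) < δ j) ∧
    Filter.Tendsto δ Filter.atTop (𝓝 0)

/-- `a ∈ X`: strictly increasing sequence of positive reals tending to `∞`. -/
def memX (a : ℕ → ℝ) : Prop :=
  (∀ j, 1 ≤ j → 0 < a j) ∧ (∀ j, 1 ≤ j → a j < a (j + 1)) ∧
    Filter.Tendsto a Filter.atTop Filter.atTop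

/-- `K ∈ 𝒮_k(n,δ)`. -/
def memS (K : ℕ → KSp) (n : ℕ → ℕ) (δ : ℕ → ℝ) (k : ℕ) : Prop :=
  ∀ j m, 2 ≤ j → j + 1 ≤ m →
    (⋃ i ∈ Aset (shiftSeq n k) j m \ Aset (shiftSeq n k) j (m - 1), (K i : Set UI))
      ⊆ ⋃ i ∈ Aset (shiftSeq n k) (j - 1) (m - 1), nbhd (K i : Set UI) (δ m)

/-- `(K, f, n, δ, a, b) ∈ 𝒴_k`. -/
def memYk (K : ℕ → KSp) (f : C(UI, ℝ)) (n : ℕ → ℕ) (δ : ℕ → ℝ) (a b : ℕ → ℝ)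
    (k : ℕ) : Prop :=
  memZ n ∧ memY δ ∧ memX a ∧ memX b ∧ memS K n δ k ∧
  ∀ j m, 1 ≤ j → j ≤ m →
    NN ⇑f (a j) ⊆ (⋃ i ∈ Aset (shiftSeq n k) j m, nbhd (K i : Set UI) (δ m)) ∧
    (⋃ i ∈ Aset n j m, (K i : Set UI)) ⊆ nbhd (NN ⇑f (b j)) (δ m)

/-- `(K, f) ∈ 𝒳`: the projection of `𝒴 = ⋃_k 𝒴_k` to `𝒦^ℕ × C(I)`. -/
def memXcal (K : ℕ → KSp) (f : C(UI, ℝ)) : Prop :=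
  ∃ n δ a b k, memYk K f n δ a b k

theorem EReal.limsup_coe_ne_top_iff {α : Type*} {l : Filter α} {u : α → ℝ} :
    limsup (fun y => (u y : EReal)) l ≠ ⊤ ↔ IsBoundedUnder (· ≤ ·) l u := by
  refine ⟨fun h => ?_, fun ⟨c, hc⟩ => ?_⟩
  · obtain ⟨c, hc, -⟩ := EReal.lt_iff_exists_real_btwn.mp (lt_top_iff_ne_top.mpr h)
    exact isBoundedUnder_of_eventually_le
      ((eventually_lt_of_limsup_lt hc).mono fun y hy => (EReal.coe_lt_coe_iff.mp hy).le)
  · refine ne_top_of_le_ne_top (EReal.coe_ne_top c) (limsup_le_of_le (by isBoundedDefault) ?_)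
    exact (eventually_map.mp hc).mono fun y hy => EReal.coe_le_coe_iff.mpr hy

theorem EReal.liminf_coe_ne_bot_iff {α : Type*} {l : Filter α} {u : α → ℝ} :
    liminf (fun y => (u y : EReal)) l ≠ ⊥ ↔ IsBoundedUnder (· ≥ ·) l u := by
  refine ⟨fun h => ?_, fun ⟨c, hc⟩ => ?_⟩
  · obtain ⟨c, -, hc⟩ := EReal.lt_iff_exists_real_btwn.mp (bot_lt_iff_ne_bot.mpr h)
    exact isBoundedUnder_of_eventually_ge
      ((eventually_lt_of_lt_liminf hc).mono fun y hy => (EReal.coe_lt_coe_iff.mp hy).le)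
  · refine ne_bot_of_le_ne_bot (EReal.coe_ne_bot c) (le_liminf_of_le (by isBoundedDefault) ?_)
    exact (eventually_map.mp hc).mono fun y hy => EReal.coe_le_coe_iff.mpr hy

lemma Monotone.exists_mem_succ_sdiff {α : Type*} {s : ℕ → Set α} (hs : Monotone s) {a : α}
    {M m : ℕ} (h : a ∈ s m \ s M) : ∃ t, M ≤ t ∧ t < m ∧ a ∈ s (t + 1) \ s t := by
  induction m with
  | zero => exact absurd (hs (Nat.zero_le M) h.1) h.2
  | succ m ih =>
    by_cases ha : a ∈ s m
    · obtain ⟨t, hMt, htm, hat⟩ := ih ⟨ha, h.2⟩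
      exact ⟨t, hMt, htm.trans (lt_add_one m), hat⟩
    · refine ⟨m, ?_, lt_add_one m, h.1, ha⟩
      by_contra! hmM
      exact h.2 (hs hmM h.1)

lemma mem_closure_of_eventually_dist_lt {X : Type*} [PseudoMetricSpace X] {A : Set X} {x : X}
    {δ : ℕ → ℝ} (hδ : Tendsto δ atTop (𝓝 0)) (h : ∀ᶠ m in atTop, ∃ a ∈ A, dist x a < δ m) :
    x ∈ closure A := by
  refine Metric.mem_closure_iff.mpr fun ε hε => ?_
  obtain ⟨m, hm, a, ha, hxa⟩ := ((hδ.eventually (gt_mem_nhds hε)).and h).exists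
  exact ⟨a, ha, hxa.trans hm⟩

lemma eventually_two_rpow_neg_lt {r : ℝ} (hr : 0 < r) : ∀ᶠ a : ℝ in atTop, (2 : ℝ) ^ (-a) < r :=
  ((tendsto_rpow_atBot_of_base_gt_one 2 one_lt_two).comp tendsto_neg_atTop_atBot).eventually
    (gt_mem_nhds hr)

lemma mem_nbhd_iff {A : Set UI} {x : UI} {r : ℝ} : x ∈ nbhd A r ↔ ∃ a ∈ A, dist x a < r := by
  simp only [nbhd, mem_iUnion₂, Metric.mem_ball, exists_prop]

def diffQuot (f : UI → ℝ) (x y : UI) : ℝ := (f y - f x) / ((y : ℝ) - x)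

/-- Without the guard `x < 1` the condition would hold vacuously at `x = 1`, where `𝓝[>] x = ⊥`. -/
def RightDiffQuotBddAbove (f : UI → ℝ) (x : UI) : Prop :=
  (x : ℝ) < 1 ∧ IsBoundedUnder (· ≤ ·) (𝓝[>] x) (diffQuot f x)

def LeftDiffQuotBddAbove (f : UI → ℝ) (x : UI) : Prop :=
  0 < (x : ℝ) ∧ IsBoundedUnder (· ≤ ·) (𝓝[<] x) (diffQuot f x)

section Dini

variable {f : UI → ℝ} {x : UI} {a : ℝ}

lemma diffQuot_neg : diffQuot (-f) x = fun y => -diffQuot f x y := by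
  funext y
  simp only [diffQuot, Pi.neg_apply]
  ring

/-- The quotients in the Dini derivatives are computed in `EReal`. -/
lemma coe_diffQuot (y : UI) :
    ((f y : EReal) - f x) / (((y : ℝ) : EReal) - ((x : ℝ) : EReal)) = (diffQuot f x y : EReal) := by
  simp only [diffQuot, EReal.coe_sub, EReal.coe_div]

lemma diniSupR_ne_top_iff :
    DiniSupR f x ≠ ⊤ ↔ IsBoundedUnder (· ≤ ·) (𝓝[>] x) (diffQuot f x) := by
  simp only [DiniSupR, coe_diffQuot, EReal.limsup_coe_ne_top_iff]

lemma diniSupL_ne_top_iff :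
    DiniSupL f x ≠ ⊤ ↔ IsBoundedUnder (· ≤ ·) (𝓝[<] x) (diffQuot f x) := by
  simp only [DiniSupL, coe_diffQuot, EReal.limsup_coe_ne_top_iff]

lemma diniInfR_ne_bot_iff :
    DiniInfR f x ≠ ⊥ ↔ IsBoundedUnder (· ≤ ·) (𝓝[>] x) (diffQuot (-f) x) := by
  simp only [DiniInfR, coe_diffQuot, EReal.liminf_coe_ne_bot_iff, diffQuot_neg,
    isBoundedUnder_le_neg]

lemma diniInfL_ne_bot_iff :
    DiniInfL f x ≠ ⊥ ↔ IsBoundedUnder (· ≤ ·) (𝓝[<] x) (diffQuot (-f) x) := by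
  simp only [DiniInfL, coe_diffQuot, EReal.liminf_coe_ne_bot_iff, diffQuot_neg,
    isBoundedUnder_le_neg]

lemma isKnotPoint_iff : IsKnotPoint f x ↔
    ((x : ℝ) < 1 → DiniSupR f x = ⊤ ∧ DiniInfR f x = ⊥) ∧
      (0 < (x : ℝ) → DiniSupL f x = ⊤ ∧ DiniInfL f x = ⊥) := by
  obtain ⟨h0, h1⟩ := x.2
  rcases h0.eq_or_lt with h0 | h0 <;> rcases h1.eq_or_lt with h1 | h1 <;>
    simp only [IsKnotPoint] <;> grind

lemma mem_nonKnot_iff : x ∈ NonKnot f ↔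
    RightDiffQuotBddAbove f x ∨ RightDiffQuotBddAbove (-f) x ∨
      LeftDiffQuotBddAbove f x ∨ LeftDiffQuotBddAbove (-f) x := by
  rw [RightDiffQuotBddAbove, RightDiffQuotBddAbove, LeftDiffQuotBddAbove, LeftDiffQuotBddAbove,
    ← diniInfR_ne_bot_iff, ← diniInfL_ne_bot_iff, ← diniSupR_ne_top_iff, ← diniSupL_ne_top_iff,
    NonKnot, mem_ofPred_eq, isKnotPoint_iff]
  tauto

end Dini

section NonKnot

variable {f : UI → ℝ} {x : UI} {a : ℝ}

lemma nplusUp_neg : NplusUp (-f) a = NplusLow f a := by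
  ext x
  simp only [NplusUp, NplusLow, Pi.neg_apply, mem_ofPred_eq]
  refine and_congr_right fun _ => forall₃_congr fun y _ _ => ?_
  constructor <;> intro h <;> linarith

lemma nminusUp_neg : NminusUp (-f) a = NminusLow f a := by
  ext x
  simp only [NminusUp, NminusLow, Pi.neg_apply, mem_ofPred_eq]
  refine and_congr_right fun _ => forall₃_congr fun y _ _ => ?_
  constructor <;> intro h <;> linarith

lemma NN_eq : NN f a = NplusUp f a ∪ NplusUp (-f) a ∪ NminusUp f a ∪ NminusUp (-f) a := by
  simp only [NN, Nhat, Ncheck, nplusUp_neg, nminusUp_neg]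
  ac_rfl

lemma rightDiffQuotBddAbove_of_mem_nplusUp (hx : x ∈ NplusUp f a) :
    RightDiffQuotBddAbove f x := by
  have hr : (0 : ℝ) < 2 ^ (-a) := Real.rpow_pos_of_pos two_pos _
  refine ⟨by linarith [hx.1], isBoundedUnder_of_eventually_le (a := a) ?_⟩
  have hnear : ∀ᶠ y : UI in 𝓝 x, (y : ℝ) < x + 2 ^ (-a) :=
    (continuous_subtype_val.tendsto x).eventually (gt_mem_nhds (by linarith))
  filter_upwards [self_mem_nhdsWithin, nhdsWithin_le_nhds hnear] with y (hxy : (x : ℝ) < y) hy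
  rw [diffQuot, div_le_iff₀ (sub_pos.mpr hxy)]
  exact hx.2 y hxy.le hy.le

lemma leftDiffQuotBddAbove_of_mem_nminusUp (hx : x ∈ NminusUp f a) :
    LeftDiffQuotBddAbove f x := by
  have hr : (0 : ℝ) < 2 ^ (-a) := Real.rpow_pos_of_pos two_pos _
  refine ⟨by linarith [hx.1], isBoundedUnder_of_eventually_le (a := a) ?_⟩
  have hnear : ∀ᶠ y : UI in 𝓝 x, (x : ℝ) - 2 ^ (-a) < y :=
    (continuous_subtype_val.tendsto x).eventually (lt_mem_nhds (by linarith))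
  filter_upwards [self_mem_nhdsWithin, nhdsWithin_le_nhds hnear] with y (hxy : (y : ℝ) < x) hy
  rw [diffQuot, div_le_iff_of_neg (sub_neg.mpr hxy)]
  exact hx.2 y hy.le hxy.le

lemma RightDiffQuotBddAbove.eventually_mem_nplusUp (h : RightDiffQuotBddAbove f x) :
    ∀ᶠ a in atTop, x ∈ NplusUp f a := by
  obtain ⟨hx1, c, hc⟩ := h
  obtain ⟨ε, hε, hball⟩ := Metric.mem_nhdsWithin_iff.mp (eventually_map.mp hc)
  filter_upwards [eventually_ge_atTop c,
    eventually_two_rpow_neg_lt (lt_min hε (sub_pos.mpr hx1))] with a hca ha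
  have hmin := lt_min_iff.mp ha
  refine ⟨by linarith, fun y hxy hy => ?_⟩
  rcases hxy.eq_or_lt with hxy | hxy
  · simp [Subtype.ext hxy.symm]
  have hdist : dist y x < ε := by
    rw [Subtype.dist_eq, Real.dist_eq, abs_lt]; constructor <;> linarith
  have hq : diffQuot f x y ≤ c := hball ⟨hdist, hxy⟩
  rw [diffQuot, div_le_iff₀ (sub_pos.mpr hxy)] at hq
  nlinarith

lemma LeftDiffQuotBddAbove.eventually_mem_nminusUp (h : LeftDiffQuotBddAbove f x) :
    ∀ᶠ a in atTop, x ∈ NminusUp f a := by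
  obtain ⟨hx0, c, hc⟩ := h
  obtain ⟨ε, hε, hball⟩ := Metric.mem_nhdsWithin_iff.mp (eventually_map.mp hc)
  filter_upwards [eventually_ge_atTop c, eventually_two_rpow_neg_lt (lt_min hε hx0)] with a hca ha
  have hmin := lt_min_iff.mp ha
  refine ⟨by linarith, fun y hy hyx => ?_⟩
  rcases hyx.eq_or_lt with hyx | hyx
  · simp [Subtype.ext hyx]
  have hdist : dist y x < ε := by
    rw [Subtype.dist_eq, Real.dist_eq, abs_lt]; constructor <;> linarith
  have hq : diffQuot f x y ≤ c := hball ⟨hdist, hyx⟩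
  rw [diffQuot, div_le_iff_of_neg (sub_neg.mpr hyx)] at hq
  nlinarith

lemma NN_subset_nonKnot : NN f a ⊆ NonKnot f := by
  rw [NN_eq]
  rintro x (((hx | hx) | hx) | hx) <;> rw [mem_nonKnot_iff]
  · exact Or.inl (rightDiffQuotBddAbove_of_mem_nplusUp hx)
  · exact Or.inr (Or.inl (rightDiffQuotBddAbove_of_mem_nplusUp hx))
  · exact Or.inr (Or.inr (Or.inl (leftDiffQuotBddAbove_of_mem_nminusUp hx)))
  · exact Or.inr (Or.inr (Or.inr (leftDiffQuotBddAbove_of_mem_nminusUp hx)))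

lemma eventually_mem_NN_of_mem_nonKnot (hx : x ∈ NonKnot f) : ∀ᶠ a in atTop, x ∈ NN f a := by
  simp only [NN_eq]
  rcases mem_nonKnot_iff.mp hx with h | h | h | h
  · exact h.eventually_mem_nplusUp.mono fun a ha => Or.inl (Or.inl (Or.inl ha))
  · exact h.eventually_mem_nplusUp.mono fun a ha => Or.inl (Or.inl (Or.inr ha))
  · exact h.eventually_mem_nminusUp.mono fun a ha => Or.inl (Or.inr ha)
  · exact h.eventually_mem_nminusUp.mono fun a ha => Or.inr ha

/-- Writing `y = x + t` turns the defining condition into an intersection of closed sets;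
`IccExtend` evaluates `f` at `x + t` without a membership proof. -/
lemma isClosed_nplusUp (hf : Continuous f) (a : ℝ) : IsClosed (NplusUp f a) := by
  set g := IccExtend zero_le_one f
  have hg : Continuous g := hf.Icc_extend'
  have hN : NplusUp f a = {x : UI | (x : ℝ) ≤ 1 - 2 ^ (-a)} ∩
      ⋂ t ∈ Icc 0 ((2 : ℝ) ^ (-a)), {x : UI | g (x + t) - f x ≤ a * t} := by
    ext x
    simp only [NplusUp, mem_inter_iff, mem_iInter, mem_ofPred_eq]
    refine and_congr_right fun hx => ⟨fun h t ht => ?_, fun h y hxy hy => ?_⟩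
    · have hxt : (x : ℝ) + t ∈ Icc (0 : ℝ) 1 := ⟨by linarith [x.2.1, ht.1], by linarith [ht.2]⟩
      rw [show g _ = f ⟨_, hxt⟩ from IccExtend_of_mem _ _ hxt]
      simpa using h ⟨_, hxt⟩ (by simp [ht.1]) (by simp [ht.2])
    · simpa [g, IccExtend_val] using h (y - x) ⟨by linarith, by linarith⟩
  rw [hN]
  exact (isClosed_le (by fun_prop) continuous_const).inter
    (isClosed_biInter fun t _ => isClosed_le (by fun_prop) (by fun_prop))

lemma isClosed_nminusUp (hf : Continuous f) (a : ℝ) : IsClosed (NminusUp f a) := by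
  set g := IccExtend zero_le_one f
  have hg : Continuous g := hf.Icc_extend'
  have hN : NminusUp f a = {x : UI | 2 ^ (-a) ≤ (x : ℝ)} ∩
      ⋂ t ∈ Icc 0 ((2 : ℝ) ^ (-a)), {x : UI | -(a * t) ≤ g (x - t) - f x} := by
    ext x
    simp only [NminusUp, mem_inter_iff, mem_iInter, mem_ofPred_eq]
    refine and_congr_right fun hx => ⟨fun h t ht => ?_, fun h y hy hyx => ?_⟩
    · have hxt : (x : ℝ) - t ∈ Icc (0 : ℝ) 1 := ⟨by linarith [ht.2], by linarith [x.2.2, ht.1]⟩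
      rw [show g _ = f ⟨_, hxt⟩ from IccExtend_of_mem _ _ hxt]
      have := h ⟨_, hxt⟩ (by simp only; linarith [ht.2]) (by simp [ht.1])
      simp only at this
      linarith
    · have := h (x - y) ⟨by linarith, by linarith⟩
      simp only [g, sub_sub_cancel, IccExtend_val] at this
      linarith
  rw [hN]
  exact (isClosed_le continuous_const (by fun_prop)).inter
    (isClosed_biInter fun t _ => isClosed_le (by fun_prop) (by fun_prop))

lemma isClosed_NN (hf : Continuous f) (a : ℝ) : IsClosed (NN f a) := by
  rw [NN_eq]
  exact (((isClosed_nplusUp hf a).union (isClosed_nplusUp hf.neg a)).union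
    (isClosed_nminusUp hf a)).union (isClosed_nminusUp hf.neg a)

end NonKnot

lemma self_le_of_memZ {n : ℕ → ℕ} (hn : memZ n) {j : ℕ} (hj : 1 ≤ j) : j ≤ n j := by
  induction j, hj using Nat.le_induction with
  | base => exact (hn 1 le_rfl).1
  | succ j hj ih => have := (hn j hj).2; omega

lemma mem_Aset_self {n : ℕ → ℕ} (hn : memZ n) {i : ℕ} (hi : 1 ≤ i) (m : ℕ) : i ∈ Aset n i m :=
  Or.inl ⟨hi, self_le_of_memZ hn hi⟩

section Aset

variable {N : ℕ → ℕ}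

lemma Aset_mono (j : ℕ) : Monotone (Aset N j) := fun _ _ h =>
  union_subset_union_right _ (biUnion_subset_biUnion_left (Ico_subset_Ico_right h))

lemma Aset_one (m : ℕ) : Aset N 1 m = Icc 1 (N 1) := by
  simp [Aset]

lemma Aset_finite (j m : ℕ) : (Aset N j m).Finite :=
  (finite_Icc _ _).union ((finite_Ico _ _).biUnion fun _ _ => finite_Icc _ _)

lemma one_le_of_mem_Aset {j m i : ℕ} (h : i ∈ Aset N j m) : 1 ≤ i := by
  simp only [Aset, mem_union, mem_Icc, mem_iUnion] at h
  omega

end Aset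

/-- `⋃_{i ∈ A_j^∞(N)} K_i`, where `A_j^∞(N) = ⋃_m A_j^m(N)`. -/
def iUnionAset (K : ℕ → KSp) (N : ℕ → ℕ) (j : ℕ) : Set UI :=
  ⋃ m, ⋃ i ∈ Aset N j m, (K i : Set UI)

lemma iUnionAset_subset (K : ℕ → KSp) (N : ℕ → ℕ) (j : ℕ) :
    iUnionAset K N j ⊆ ⋃ i ∈ Ici 1, (K i : Set UI) := by
  simp only [iUnionAset, iUnion_subset_iff]
  exact fun m i hi => subset_biUnion_of_mem (u := fun i => (K i : Set UI)) (one_le_of_mem_Aset hi)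

lemma isClosed_biUnion_Aset (K : ℕ → KSp) (N : ℕ → ℕ) (j m : ℕ) :
    IsClosed (⋃ i ∈ Aset N j m, (K i : Set UI)) :=
  (Aset_finite j m).isClosed_biUnion fun i _ => (K i).isClosed

lemma isClosed_iUnionAset_one (K : ℕ → KSp) (N : ℕ → ℕ) : IsClosed (iUnionAset K N 1) := by
  simpa only [iUnionAset, Aset_one, iUnion_const] using isClosed_biUnion_Aset K N 1 1

section Descent

variable {K : ℕ → KSp} {n : ℕ → ℕ} {δ : ℕ → ℝ} {k : ℕ}

lemma exists_dist_lt_of_mem_Aset_sdiff (hS : memS K n δ k) {l M m i : ℕ} (hl : 1 ≤ l)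
    (hM : l + 1 ≤ M) (him : i ∈ Aset (shiftSeq n k) (l + 1) m)
    (hiM : i ∉ Aset (shiftSeq n k) (l + 1) M) {z : UI} (hz : z ∈ K i) :
    ∃ t, M ≤ t ∧ ∃ w ∈ iUnionAset K (shiftSeq n k) l, dist z w < δ (t + 1) := by
  obtain ⟨t, hMt, -, hit⟩ := (Aset_mono _).exists_mem_succ_sdiff ⟨him, hiM⟩
  have hzt := hS (l + 1) (t + 1) (by omega) (by omega) (mem_biUnion (by simpa using hit) hz)
  simp only [Nat.add_sub_cancel] at hzt
  obtain ⟨i', hi', hzi'⟩ := mem_iUnion₂.mp hzt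
  obtain ⟨w, hw, hzw⟩ := mem_nbhd_iff.mp hzi'
  exact ⟨t, hMt, w, mem_iUnion_of_mem t (mem_biUnion hi' hw), hzw⟩

lemma closure_iUnionAset_succ_subset (hδ : Tendsto δ atTop (𝓝 0)) (hS : memS K n δ k) {l : ℕ}
    (hl : 1 ≤ l) : closure (iUnionAset K (shiftSeq n k) (l + 1)) ⊆
      iUnionAset K (shiftSeq n k) (l + 1) ∪ closure (iUnionAset K (shiftSeq n k) l) := by
  intro x hx
  by_cases hxU : x ∈ iUnionAset K (shiftSeq n k) (l + 1)
  · exact Or.inl hxU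
  refine Or.inr (Metric.mem_closure_iff.mpr fun ε hε => ?_)
  obtain ⟨M₀, hM₀⟩ := eventually_atTop.mp (hδ.eventually (gt_mem_nhds (half_pos hε)))
  set M := max M₀ (l + 1)
  -- `x` keeps a positive distance from the closed stage `M`, so the `K_i` that come close to `x`
  -- have indices entering after stage `M`, and `S_k(n,δ)` moves them to level `l`.
  have hxD : x ∉ ⋃ i ∈ Aset (shiftSeq n k) (l + 1) M, (K i : Set UI) :=
    fun h => hxU (mem_iUnion_of_mem M h)
  obtain ⟨ε₀, hε₀, hball⟩ :=
    Metric.isOpen_iff.mp (isClosed_biUnion_Aset K _ _ M).isOpen_compl x hxD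
  obtain ⟨z, hzU, hxz⟩ := Metric.mem_closure_iff.mp hx (min ε₀ (ε / 2)) (lt_min hε₀ (half_pos hε))
  obtain ⟨m, i, him, hz⟩ : ∃ m, ∃ i ∈ Aset (shiftSeq n k) (l + 1) m, z ∈ K i := by
    simpa [iUnionAset] using hzU
  have hiM : i ∉ Aset (shiftSeq n k) (l + 1) M := fun hiM =>
    hball (Metric.mem_ball'.mpr (hxz.trans_le (min_le_left _ _))) (mem_biUnion hiM hz)
  obtain ⟨t, hMt, w, hw, hzw⟩ := exists_dist_lt_of_mem_Aset_sdiff hS hl (le_max_right _ _) him hiM hz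
  refine ⟨w, hw, ?_⟩
  calc dist x w ≤ dist x z + dist z w := dist_triangle _ _ _
    _ < ε / 2 + ε / 2 :=
      add_lt_add (hxz.trans_le (min_le_right _ _)) (hzw.trans (hM₀ _ (by omega)))
    _ = ε := add_halves ε

lemma closure_iUnionAset_subset (hδ : Tendsto δ atTop (𝓝 0)) (hS : memS K n δ k) {l : ℕ}
    (hl : 1 ≤ l) : closure (iUnionAset K (shiftSeq n k) l) ⊆ ⋃ i ∈ Ici 1, (K i : Set UI) := by
  induction l, hl using Nat.le_induction with
  | base =>
    rw [(isClosed_iUnionAset_one K _).closure_eq]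
    exact iUnionAset_subset K _ 1
  | succ l hl ih =>
    exact (closure_iUnionAset_succ_subset hδ hS hl).trans
      (union_subset (iUnionAset_subset K _ _) ih)

end Descent

/-- If `(K, f) ∈ 𝒳`, then `⋃_{i≥1} K_i = N(f)`. -/
theorem iUnion_eq_nonKnot_of_memXcal (K : ℕ → KSp) (f : C(UI, ℝ)) (h : memXcal K f) :
    (⋃ i ∈ Set.Ici 1, (K i : Set UI)) = NonKnot ⇑f := by
  obtain ⟨n, δ, a, b, k, hn, hδ, ha, -, hS, hK⟩ := h
  apply Subset.antisymm
  · refine iUnion₂_subset fun i (hi : 1 ≤ i) x hx => NN_subset_nonKnot (a := b i) ?_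
    rw [← (isClosed_NN f.continuous (b i)).closure_eq]
    refine mem_closure_of_eventually_dist_lt hδ.2.2 ((eventually_ge_atTop i).mono fun m hm => ?_)
    exact mem_nbhd_iff.mp ((hK i m hi hm).2 (mem_biUnion (mem_Aset_self hn hi m) hx))
  · intro x hx
    obtain ⟨j, hxj, hj⟩ :=
      ((ha.2.2.eventually (eventually_mem_NN_of_mem_nonKnot hx)).and (eventually_ge_atTop 1)).exists
    refine closure_iUnionAset_subset hδ.2.2 hS hj (mem_closure_of_eventually_dist_lt hδ.2.2
      ((eventually_ge_atTop j).mono fun m hm => ?_))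
    obtain ⟨i, hi, hxi⟩ := mem_iUnion₂.mp ((hK j m hj hm).1 hxj)
    obtain ⟨w, hw, hxw⟩ := mem_nbhd_iff.mp hxi
    exact ⟨w, mem_iUnion_of_mem m (mem_biUnion hi hw), hxw⟩

end
end

section
/- For every f ∈ C(I), the set {K ∈ K^ℕ : (K, f) ∈ 𝒳} is invariant under finite permutations; that is, if (K, f) ∈ 𝒳 and σ is a permutation of ℕ fixing all but finitely many positive integers, then ((K_{σ(n)})_{n∈ℕ}, f) ∈ 𝒳. -/
open Filter Topology TopologicalSpace Set MeasureTheory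

noncomputable section

/-! Shifting `n` to `n^s` and `b` to `b^s` keeps `(K, f)` in `𝒴_k`: the index sets satisfy
`A_j^{m+s}(n) ⊆ A_j^m(n^s) ⊆ A_{j+s}^{m+s}(n)`, the new blocks `A_j^{m+1} \ A_j^m` of `n^s` are
those of `n`, and `δ` decreases. For `s` large, every `A_j^m` of the shifted data contains
`[n_{s+1}]`, hence every index moved by `σ`, so permuting `K` by `σ` changes none of the unions
in the definition of `𝒴_k`, while the new blocks consist of fixed points of `σ`. -/

theorem memZ.mono {n : ℕ → ℕ} (hn : memZ n) {i i' : ℕ} (hi : 1 ≤ i) (h : i ≤ i') :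
    n i ≤ n i' :=
  monotoneOn_nat_Ici_of_le_succ (fun j hj => (Nat.le_add_right _ _).trans (hn j hj).2) hi
    (hi.trans h) h

theorem memZ.le_apply {n : ℕ → ℕ} (hn : memZ n) {i : ℕ} (hi : 1 ≤ i) : i ≤ n i := by
  induction i, hi using Nat.le_induction with
  | base => exact (hn 1 le_rfl).1
  | succ i hi ih => have := (hn i hi).2; omega

theorem memZ.shift {n : ℕ → ℕ} (hn : memZ n) (s : ℕ) : memZ (shiftSeq n s) := by
  intro j hj
  have h := hn (j + s) (by omega)
  simp only [shiftSeq, add_right_comm j 1 s]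
  exact ⟨h.1, by omega⟩

theorem memY.anti {δ : ℕ → ℝ} (hδ : memY δ) {m m' : ℕ} (hm : 1 ≤ m) (h : m ≤ m') :
    δ m' ≤ δ m :=
  antitoneOn_nat_Ici_of_succ_le (fun j hj => (hδ.2.1 j hj).le) hm (hm.trans h) h

theorem memX.comp_add_right {a : ℕ → ℝ} (ha : memX a) (s : ℕ) : memX (fun j => a (j + s)) :=
  ⟨fun j hj => ha.1 (j + s) (by omega),
    fun j hj => by simpa only [add_right_comm j 1 s] using ha.2.1 (j + s) (by omega),
    ha.2.2.comp (tendsto_add_atTop_nat s)⟩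

theorem shiftSeq_shiftSeq_comm (n : ℕ → ℕ) (s k : ℕ) :
    shiftSeq (shiftSeq n s) k = shiftSeq (shiftSeq n k) s := by
  funext j
  simp only [shiftSeq, add_right_comm]

theorem nbhd_mono {A : Set UI} {r r' : ℝ} (h : r ≤ r') : nbhd A r ⊆ nbhd A r' :=
  iUnion₂_mono fun _ _ => Metric.ball_subset_ball h

section IndexSets

variable {p : ℕ → ℕ} {j m : ℕ}

theorem mem_Aset_iff {x : ℕ} :
    x ∈ Aset p j m ↔
      x ∈ Icc 1 (p j) ∨ ∃ i ∈ Ico j m, x ∈ Icc (p i + 1) (p i + (j - 1)) := by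
  simp only [Aset, mem_union, mem_iUnion₂, exists_prop]

theorem Icc_subset_Aset {N : ℕ} (hN : N ≤ p j) : Icc 1 N ⊆ Aset p j m :=
  (Icc_subset_Icc_right hN).trans subset_union_left

theorem Aset_mono_s18 {m' : ℕ} (h : m ≤ m') : Aset p j m ⊆ Aset p j m' :=
  union_subset_union_right _ (biUnion_subset_biUnion_left (Ico_subset_Ico_right h))

theorem Aset_subset_Aset_shiftSeq (hp : memZ p) (hj : 1 ≤ j) (s : ℕ) :
    Aset p j (m + s) ⊆ Aset (shiftSeq p s) j m := by
  intro x hx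
  rw [mem_Aset_iff] at hx ⊢
  rcases hx with ⟨h1, h2⟩ | ⟨i, ⟨hji, him⟩, hx⟩
  · exact Or.inl ⟨h1, h2.trans (hp.mono hj (by omega))⟩
  · by_cases h : j + s ≤ i
    · refine Or.inr ⟨i - s, ⟨by omega, by omega⟩, ?_⟩
      simpa only [shiftSeq, Nat.sub_add_cancel (show s ≤ i by omega)] using hx
    · -- the block after `p i` ends below `p (i + 1) ≤ p (j + s)`
      have h1 : p i + i ≤ p (i + 1) := (hp i (by omega)).2
      have h2 : p (i + 1) ≤ p (j + s) := hp.mono (by omega) (by omega)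
      simp only [shiftSeq, mem_Icc] at hx ⊢
      omega

theorem Aset_shiftSeq_subset (s : ℕ) : Aset (shiftSeq p s) j m ⊆ Aset p (j + s) (m + s) := by
  intro x hx
  rw [mem_Aset_iff] at hx ⊢
  rcases hx with hx | ⟨i, ⟨hji, him⟩, hx1, hx2⟩
  · exact Or.inl hx
  · simp only [shiftSeq] at hx1 hx2
    exact Or.inr ⟨i + s, ⟨by omega, by omega⟩, hx1, hx2.trans (by omega)⟩

theorem Aset_succ_diff (hp : memZ p) (hj : 1 ≤ j) (hjm : j ≤ m) :
    Aset p j (m + 1) \ Aset p j m = Icc (p m + 1) (p m + (j - 1)) := by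
  ext x
  simp only [Set.mem_sdiff, mem_Aset_iff, mem_Ico, mem_Icc]
  constructor
  · rintro ⟨h1 | ⟨i, ⟨hji, him⟩, hx⟩, h2⟩
    · exact absurd (Or.inl h1) h2
    · rcases (Nat.lt_succ_iff.mp him).lt_or_eq with h | rfl
      · exact absurd (Or.inr ⟨i, ⟨hji, h⟩, hx⟩) h2
      · exact hx
  · intro hx
    refine ⟨Or.inr ⟨m, ⟨hjm, m.lt_succ_self⟩, hx⟩, ?_⟩
    rintro (⟨_, h⟩ | ⟨i, ⟨hji, him⟩, hi⟩)
    · have := hp.mono hj hjm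
      omega
    · have h1 : p i + i ≤ p (i + 1) := (hp i (by omega)).2
      have h2 : p (i + 1) ≤ p m := hp.mono (by omega) (by omega)
      omega

theorem Aset_shiftSeq_succ_diff (hp : memZ p) (hj : 1 ≤ j) (hjm : j ≤ m) (s : ℕ) :
    Aset (shiftSeq p s) j (m + 1) \ Aset (shiftSeq p s) j m =
      Aset p j (m + s + 1) \ Aset p j (m + s) := by
  rw [Aset_succ_diff (hp.shift s) hj hjm, Aset_succ_diff hp hj (by omega), shiftSeq]

end IndexSets

section Permutations

variable {α β : Type*}

theorem biUnion_perm_eq {σ : Equiv.Perm α} {A : Set α} (h : {i | σ i ≠ i} ⊆ A)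
    (F : α → Set β) : ⋃ i ∈ A, F (σ i) = ⋃ i ∈ A, F i := by
  rw [← biUnion_image, image_perm h]

end Permutations

section Membership

variable {K : ℕ → KSp} {f : C(UI, ℝ)} {n : ℕ → ℕ} {δ a b : ℕ → ℝ} {k : ℕ}

theorem memS.shift (hS : memS K n δ k) (hn : memZ n) (hδ : memY δ) (s : ℕ) :
    memS K (shiftSeq n s) δ k := by
  intro j m hj hm
  obtain ⟨m, rfl⟩ : ∃ m', m = m' + 1 := ⟨m - 1, by omega⟩
  have hp := hn.shift k
  rw [shiftSeq_shiftSeq_comm, Nat.add_sub_cancel,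
    Aset_shiftSeq_succ_diff hp (by omega) (by omega)]
  refine (hS j (m + s + 1) hj (by omega)).trans ?_
  rw [Nat.add_sub_cancel]
  exact biUnion_mono (Aset_subset_Aset_shiftSeq hp (by omega) s)
    fun _ _ => nbhd_mono (hδ.anti (by omega) (by omega))

theorem memYk.shift (h : memYk K f n δ a b k) (s : ℕ) :
    memYk K f (shiftSeq n s) δ a (fun j => b (j + s)) k := by
  obtain ⟨hn, hδ, ha, hb, hS, hN⟩ := h
  refine ⟨hn.shift s, hδ, ha, hb.comp_add_right s, hS.shift hn hδ s,
    fun j m hj hjm => ⟨?_, ?_⟩⟩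
  · rw [shiftSeq_shiftSeq_comm]
    exact (hN j m hj hjm).1.trans <| biUnion_subset_biUnion_left <|
      (Aset_mono_s18 (m.le_add_right s)).trans (Aset_subset_Aset_shiftSeq (hn.shift k) hj s)
  · exact (biUnion_subset_biUnion_left (Aset_shiftSeq_subset s)).trans <|
      (hN (j + s) (m + s) (by omega) (by omega)).2.trans
        (nbhd_mono (hδ.anti (by omega) (by omega)))

theorem memYk.perm (h : memYk K f n δ a b k) {σ : Equiv.Perm ℕ}
    (hσ : {i | σ i ≠ i} ⊆ Icc 1 (n 1)) : memYk (fun i => K (σ i)) f n δ a b k := by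
  obtain ⟨hn, hδ, ha, hb, hS, hN⟩ := h
  have hsupp : ∀ {q : ℕ → ℕ} {j}, n 1 ≤ q j → ∀ m, {i | σ i ≠ i} ⊆ Aset q j m :=
    fun hq _ => hσ.trans (Icc_subset_Aset hq)
  have hle : ∀ {j}, 1 ≤ j → n 1 ≤ n j := hn.mono le_rfl
  have hle_shift : ∀ {j}, 1 ≤ j → n 1 ≤ shiftSeq n k j :=
    fun hj => hn.mono le_rfl (by omega)
  refine ⟨hn, hδ, ha, hb, fun j m hj hm => ?_, fun j m hj hjm => ⟨?_, ?_⟩⟩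
  · have hfix : ∀ i ∈ Aset (shiftSeq n k) j m \ Aset (shiftSeq n k) j (m - 1), σ i = i :=
      fun i hi => not_not.mp fun h => hi.2 (hsupp (hle_shift (by omega)) _ h)
    beta_reduce
    rw [iUnion₂_congr fun i hi => by rw [hfix i hi],
      biUnion_perm_eq (hsupp (hle_shift (by omega)) _) fun i => nbhd (K i : Set UI) (δ m)]
    exact hS j m hj hm
  · rw [biUnion_perm_eq (hsupp (hle_shift hj) m) fun i => nbhd (K i : Set UI) (δ m)]
    exact (hN j m hj hjm).1
  · rw [biUnion_perm_eq (hsupp (hle hj) m) fun i => (K i : Set UI)]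
    exact (hN j m hj hjm).2

end Membership

/-- For each `f ∈ C(I)`, the set `{K : (K,f) ∈ 𝒳}` is invariant under finite
permutations (of the positive integers). -/
theorem memXcal_invariant_perm (f : C(UI, ℝ)) (K : ℕ → KSp) (hK : memXcal K f)
    (σ : Equiv.Perm ℕ) (hσ : {i | σ i ≠ i}.Finite) (hσ0 : σ 0 = 0) :
    memXcal (fun i => K (σ i)) f := by
  obtain ⟨n, δ, a, b, k, h⟩ := hK
  obtain ⟨s, hs⟩ := hσ.bddAbove
  have hsupp : {i | σ i ≠ i} ⊆ Icc 1 (shiftSeq n s 1) := fun i hi => by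
    have hi0 : i ≠ 0 := by rintro rfl; exact hi hσ0
    have hn : 1 + s ≤ n (1 + s) := h.1.le_apply (by omega)
    have his : i ≤ s := hs hi
    simp only [shiftSeq, mem_Icc]
    omega
  exact ⟨_, _, _, _, _, (h.shift s).perm hsupp⟩

end
end
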